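/- If u : ℝ × ℝ → ℂ is twice continuously differentiable and satisfies the Klein-Gordon equation u_tt - u_xx + αu = 0, then for any complex k and any root Ω of ω² + α + k² = 0, the local relation holds: ∂_t[e^{-ikx+Ωt}(-Ω·u + u_t)] - ∂_x[e^{-ikx+Ωt}(ik·u + u_x)] = 0 for all (x,t). -/

import Mathlib

/-! With `E = exp(-ikx + Ωt)`, differentiating the two fluxes gives
`∂ₜ[E(-Ωu + uₜ)] = E(uₜₜ - Ω²u)` and `∂ₓ[E(iku + uₓ)] = E(uₓₓ + k²u)`, so their difference is
`E(uₜₜ - uₓₓ - (Ω² + k²)u) = E(uₜₜ - uₓₓ + αu) = 0`. -/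

open Complex

lemma hasDerivAt_mul_ofReal (a : ℂ) (t : ℝ) : HasDerivAt (fun s : ℝ => a * s) a t := by
  simpa using (hasDerivAt_id t).ofReal_comp.const_mul a

lemma hasDerivAt_cexp_mul_add_deriv {φ f : ℝ → ℂ} {c : ℂ} (b : ℂ) {t : ℝ} (hφ : HasDerivAt φ c t)
    (hf : DifferentiableAt ℝ f t) (hf' : DifferentiableAt ℝ (deriv f) t) :
    HasDerivAt (fun s => exp (φ s) * (b * f s + deriv f s))
      (exp (φ t) * (c * b * f t + (b + c) * deriv f t + deriv (deriv f) t)) t :=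
  (hφ.cexp.fun_mul ((hf.hasDerivAt.const_mul b).fun_add hf'.hasDerivAt)).congr_deriv (by ring)

lemma ContDiff.differentiable_deriv_of_two {𝕜 F : Type*} [NontriviallyNormedField 𝕜]
    [NormedAddCommGroup F] [NormedSpace 𝕜 F] {f : 𝕜 → F} (hf : ContDiff 𝕜 2 f) :
    Differentiable 𝕜 (deriv f) :=
  (hf.iterate_deriv' 1 1).differentiable one_ne_zero

theorem kg_local_relation (α : ℝ) (k Ω : ℂ) (hΩ : Ω ^ 2 + (α : ℂ) + k ^ 2 = 0)
    (u : ℝ → ℝ → ℂ) (hu : ContDiff ℝ 2 ↿u)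
    (hKG : ∀ x t : ℝ,
      deriv (fun s => deriv (fun s' => u x s') s) t
        - deriv (fun y => deriv (fun y' => u y' t) y) x + (α : ℂ) * u x t = 0) :
    ∀ x t : ℝ,
      deriv (fun s : ℝ =>
          Complex.exp (-Complex.I * k * x + Ω * s) * (-Ω * u x s + deriv (fun s' => u x s') s)) t
        - deriv (fun y : ℝ =>
          Complex.exp (-Complex.I * k * y + Ω * t)
            * (Complex.I * k * u y t + deriv (fun y' => u y' t) y)) x = 0 := by
  intro x t
  have hu_t : ContDiff ℝ 2 (fun s => u x s) := hu.comp (contDiff_const.prodMk contDiff_id)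
  have hu_x : ContDiff ℝ 2 (fun y => u y t) := hu.comp (contDiff_id.prodMk contDiff_const)
  have hφ_t := (hasDerivAt_mul_ofReal Ω t).const_add (-I * k * x)
  have hφ_x := (hasDerivAt_mul_ofReal (-I * k) x).add_const (Ω * t)
  rw [(hasDerivAt_cexp_mul_add_deriv (-Ω) hφ_t (hu_t.differentiable two_ne_zero t)
      (hu_t.differentiable_deriv_of_two t)).deriv,
    (hasDerivAt_cexp_mul_add_deriv (I * k) hφ_x (hu_x.differentiable two_ne_zero x)
      (hu_x.differentiable_deriv_of_two x)).deriv]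
  linear_combination exp (-I * k * x + Ω * t) * hKG x t
    - exp (-I * k * x + Ω * t) * u x t * hΩ + exp (-I * k * x + Ω * t) * u x t * k ^ 2 * I_sq
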